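/- Let E be a Dedekind complete Riesz space with weak order unit e, T a conditional expectation operator on E with Te = e, and S an order continuous Riesz homomorphism on E with Se = e. Then TSPe = TPe for every band projection P on E if and only if TSf = Tf for all f ∈ E. -/

import Mathlib

open Finset

/- `E` is a Riesz space (real vector lattice). -/
variable {E : Type*} [AddCommGroup E] [Lattice E]
  [CovariantClass E E (· + ·) (· ≤ ·)] [Module ℝ E] [PosSMulMono ℝ E]

/-- A sequence `u` in `E` order converges to `l` if there is a sequence `p` decreasing to `0`
with `|u n - l| ≤ p n` for all `n`. -/
def OrderConv (u : ℕ → E) (l : E) : Prop :=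
  ∃ p : ℕ → E, Antitone p ∧ IsGLB (Set.range p) 0 ∧ ∀ n, |u n - l| ≤ p n

/-- `l` is the greatest lower bound of `A` relative to the subset `F`. -/
def IsGLBIn (F A : Set E) (l : E) : Prop :=
  (∀ a ∈ A, l ≤ a) ∧ ∀ b ∈ F, (∀ a ∈ A, b ≤ a) → b ≤ l

/-- `F` is Dedekind complete (in its induced order): every nonempty subset of `F`
bounded above in `F` has a supremum in `F`. -/
def DedekindCompleteIn (F : Set E) : Prop :=
  ∀ A : Set E, A ⊆ F → A.Nonempty → (∃ b ∈ F, ∀ a ∈ A, a ≤ b) →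
    ∃ s ∈ F, (∀ a ∈ A, a ≤ s) ∧ ∀ b ∈ F, (∀ a ∈ A, a ≤ b) → s ≤ b

/-- `u` is a weak order unit of (the Riesz subspace) `F`:  `u > 0` and the band generated by
`u` is everything, equivalently no nonzero positive element of `F` is disjoint from `u`. -/
def IsWeakOrderUnitIn (F : Set E) (u : E) : Prop :=
  0 < u ∧ ∀ f ∈ F, 0 ≤ f → f ⊓ u = 0 → f = 0

/-- Band projections on a Riesz space: the linear idempotents `P` with `0 ≤ P ≤ I`. -/
def IsBandProjection (P : E →ₗ[ℝ] E) : Prop :=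
  (∀ f, P (P f) = P f) ∧ ∀ f, 0 ≤ f → 0 ≤ P f ∧ P f ≤ f

/-- `L` (restricted to `F`) is a conditional expectation operator on `F`: a positive
order continuous linear projection whose range is a Dedekind complete Riesz subspace and
which maps weak order units to weak order units. -/
def IsCondExpOn (F : Set E) (L : E → E) : Prop :=
  (∀ f ∈ F, L f ∈ F) ∧
  (∀ f ∈ F, ∀ g ∈ F, L (f + g) = L f + L g) ∧
  (∀ r : ℝ, ∀ f ∈ F, L (r • f) = r • L f) ∧
  (∀ f ∈ F, 0 ≤ f → 0 ≤ L f) ∧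
  (∀ A : Set E, A ⊆ F → A.Nonempty → DirectedOn (· ≥ ·) A → IsGLBIn F A 0 →
      IsGLBIn F (L '' A) 0) ∧
  (∀ f ∈ F, L (L f) = L f) ∧
  (∀ f ∈ L '' F, ∀ g ∈ L '' F, f ⊔ g ∈ L '' F) ∧
  DedekindCompleteIn (L '' F) ∧
  (∀ u ∈ F, IsWeakOrderUnitIn F u → IsWeakOrderUnitIn F (L u))

/-- Order continuity of a positive operator: downward directed sets with infimum `0`
are mapped to sets with infimum `0`. -/
def OrderContinuousOp (S : E →ₗ[ℝ] E) : Prop :=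
  ∀ A : Set E, A.Nonempty → DirectedOn (· ≥ ·) A → IsGLB A 0 → IsGLB (S '' A) 0

/-- Riesz homomorphism: a linear map preserving the lattice operations. -/
def IsRieszHom (S : E →ₗ[ℝ] E) : Prop := ∀ f g, S (f ⊔ g) = S f ⊔ S g

/-- `(E,T,S,e)` is a conditional expectation preserving system: `E` is a Dedekind complete
Riesz space with weak order unit `e`, `T` a conditional expectation operator on `E` with
`Te = e`, and `S` an order continuous Riesz homomorphism with `Se = e` and `TSPe = TPe`
for every band projection `P` on `E`. -/
def IsCEPS (T S : E →ₗ[ℝ] E) (e : E) : Prop :=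
  DedekindCompleteIn (Set.univ : Set E) ∧
  IsWeakOrderUnitIn (Set.univ : Set E) e ∧
  IsCondExpOn Set.univ T ∧ T e = e ∧
  IsRieszHom S ∧ OrderContinuousOp S ∧ S e = e ∧
  ∀ P : E →ₗ[ℝ] E, IsBandProjection P → T (S (P e)) = T (P e)

/-- The Cesàro means `S_n f = (1/n) ∑_{k=0}^{n-1} S^k f`. -/
noncomputable def ces (S : E →ₗ[ℝ] E) (f : E) (n : ℕ) : E :=
  (n : ℝ)⁻¹ • ∑ k ∈ Finset.range n, (S ^ k) f

/-- The principal ideal `E_e` generated by `e`. -/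
def idealE (e : E) : Set E := {f : E | ∃ k : ℝ, 0 ≤ k ∧ |f| ≤ k • e}

/-- The system `(E,T,S,e)` is ergodic if `L_S f ∈ R(T)` for every `S`-invariant `f`
(where `L_S f` is any order limit of the Cesàro means of `f`). -/
def IsErgodic (T S : E →ₗ[ℝ] E) (e : E) : Prop :=
  ∀ f l : E, S f = f → OrderConv (ces S f) l → l ∈ Set.range T

/-!
Write `D = T ∘ S - T`; the hypothesis says that `D` kills `P e` for every band projection `P`.
For `0 ≤ f ≤ e` let `P i` be the projection onto the band generated by `(f - (i / m) • e)⁺`;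
then `(i / m) • (P i e - P (i+1) e) ≤ P i f - P (i+1) f ≤ ((i+1) / m) • (P i e - P (i+1) e)`
(Freudenthal), so telescoping and the positivity of `T ∘ S` and `T` give
`-(1 / m) • T e ≤ D f ≤ (1 / m) • T e` for all `m`, whence `D f = 0`. This applies to each
`f ⊓ n • e`; as `e` is a weak order unit, `(f - n • e)⁺` decreases to `0`, and the order continuity
of `S` and `T` gives `D f = 0` for `f ≥ 0`, hence for all `f = f⁺ - f⁻`. Band projections come from
Dedekind completeness as `x ↦ ⨆_{t ≥ 0} x ⊓ t • g` on the positive cone, extended linearly.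
-/

theorem DedekindCompleteIn.exists_isLUB {β : Type*} [Lattice β]
    (hD : DedekindCompleteIn (Set.univ : Set β)) {A : Set β} (hne : A.Nonempty)
    (hbdd : BddAbove A) : ∃ s, IsLUB A s := by
  obtain ⟨b, hb⟩ := hbdd
  obtain ⟨s, -, hs, hsb⟩ := hD A A.subset_univ hne ⟨b, trivial, fun a ha => hb ha⟩
  exact ⟨s, fun a ha => hs a ha, fun c hc => hsb c trivial fun a ha => hc ha⟩

section LatticeOrderedGroup

variable {α : Type*} [AddCommGroup α] [Lattice α]

def SeqOrderContinuous (U : α → α) : Prop :=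
  ∀ x : ℕ → α, Antitone x → IsGLB (Set.range x) 0 → IsGLB (Set.range (U ∘ x)) 0

theorem SeqOrderContinuous.comp {U W : α → α} (hW : SeqOrderContinuous W)
    (hU : SeqOrderContinuous U) (hUmono : Monotone U) : SeqOrderContinuous (W ∘ U) :=
  fun x hx h0 => hW _ (hUmono.comp_antitone hx) (hU x hx h0)

variable [IsOrderedAddMonoid α]

theorem inf_add_le_add_inf {a b c : α} (ha : 0 ≤ a) (hb : 0 ≤ b) (hc : 0 ≤ c) :
    (a + b) ⊓ c ≤ a ⊓ c + b ⊓ c := by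
  rw [inf_add, add_inf, add_inf]
  exact le_inf (le_inf inf_le_left (inf_le_right.trans (le_add_of_nonneg_left ha)))
    (le_inf (inf_le_right.trans (le_add_of_nonneg_right hb))
      (inf_le_right.trans (le_add_of_nonneg_right hc)))

theorem inf_nsmul_eq_zero_of_inf_eq_zero {g h : α} (hg : 0 ≤ g) (hh : 0 ≤ h) (hgh : h ⊓ g = 0)
    (n : ℕ) : h ⊓ n • g = 0 := by
  induction n with
  | zero => simpa using hh
  | succ n ih =>
    refine le_antisymm ?_ (le_inf hh (nsmul_nonneg hg _))
    calc h ⊓ (n + 1) • g = (n • g + g) ⊓ h := by rw [inf_comm, succ_nsmul]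
      _ ≤ n • g ⊓ h + g ⊓ h := inf_add_le_add_inf (nsmul_nonneg hg n) hg hh
      _ = 0 := by rw [inf_comm, ih, inf_comm, hgh, add_zero]

theorem posPart_sub_of_nonneg {a e : α} (he : 0 ≤ e) : (a - e)⁺ = a⁺ - a⁺ ⊓ e := by
  rw [sub_inf, sub_self, sup_comm 0, posPart_def, posPart_def, sup_sub, zero_sub, sup_assoc,
    sup_eq_right.2 (neg_nonpos.2 he)]

theorem map_posPart_sub_map_negPart_of_eq_sub {G : Type*} [AddCommGroup G] {φ : α → G}
    (hadd : ∀ x y : α, 0 ≤ x → 0 ≤ y → φ (x + y) = φ x + φ y) {x a b : α} (ha : 0 ≤ a)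
    (hb : 0 ≤ b) (hx : x = a - b) : φ x⁺ - φ x⁻ = φ a - φ b := by
  have hsum : x⁺ + b = a + x⁻ := sub_eq_sub_iff_add_eq_add.1 (by rw [posPart_sub_negPart, hx])
  have := congrArg φ hsum
  rw [hadd _ _ (posPart_nonneg x) hb, hadd _ _ ha (negPart_nonneg x)] at this
  exact sub_eq_sub_iff_add_eq_add.2 this

theorem DedekindCompleteIn.nonpos_of_forall_nsmul_le (hD : DedekindCompleteIn (Set.univ : Set α))
    {x y : α} (h : ∀ n : ℕ, n • x ≤ y) : x ≤ 0 := by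
  obtain ⟨s, hs⟩ := hD.exists_isLUB (Set.range_nonempty fun n : ℕ => n • x)
    ⟨y, Set.forall_mem_range.2 h⟩
  -- `s - x` is again an upper bound of the multiples of `x`
  have hsx : s ≤ s - x := hs.2 <| Set.forall_mem_range.2 fun n =>
    le_sub_iff_add_le.2 (by simpa [succ_nsmul] using hs.1 (Set.mem_range_self (n + 1)))
  simpa using hsx

theorem IsWeakOrderUnitIn.isGLB_range_posPart_sub_nsmul
    (hD : DedekindCompleteIn (Set.univ : Set α)) {e : α} (he : IsWeakOrderUnitIn Set.univ e)
    (f : α) : IsGLB (Set.range fun n : ℕ => (f - n • e)⁺) 0 := by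
  refine ⟨Set.forall_mem_range.2 fun n => posPart_nonneg _, fun b hb => ?_⟩
  set w := b⁺ ⊓ e
  have hw : ∀ n : ℕ, w ≤ (f - n • e)⁺ ⊓ e := fun n =>
    inf_le_inf_right e (sup_le (hb ⟨n, rfl⟩) (posPart_nonneg _))
  -- passing from `n` to `n + 1` replaces `y = (f - n • e)⁺` by `y - y ⊓ e`, and `w ≤ y ⊓ e`
  have hsum : ∀ n : ℕ, n • w + (f - n • e)⁺ ≤ f⁺ := by
    intro n
    induction n with
    | zero => simp
    | succ n ih =>
      calc (n + 1) • w + (f - (n + 1) • e)⁺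
          = n • w + (f - n • e)⁺ - ((f - n • e)⁺ ⊓ e - w) := by
            rw [succ_nsmul, succ_nsmul, ← sub_sub, posPart_sub_of_nonneg he.1.le]
            abel
        _ ≤ n • w + (f - n • e)⁺ := sub_le_self _ (sub_nonneg.2 (hw n))
        _ ≤ f⁺ := ih
  have hw0 : w = 0 := le_antisymm
    (hD.nonpos_of_forall_nsmul_le fun n => le_of_add_le_of_nonneg_left (hsum n) (posPart_nonneg _))
    (le_inf (posPart_nonneg b) he.1.le)
  exact (le_posPart b).trans (he.2 _ trivial (posPart_nonneg b) hw0).le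

theorem eq_zero_of_forall_eq_sub {d : α} {y z : ℕ → α} (hy : IsGLB (Set.range y) 0)
    (hz : IsGLB (Set.range z) 0) (h : ∀ n, d = y n - z n) : d = 0 :=
  le_antisymm
    (hy.2 <| Set.forall_mem_range.2 fun n => (h n).trans_le (sub_le_self _ (hz.1 ⟨n, rfl⟩)))
    (neg_nonpos.1 <| hz.2 <| Set.forall_mem_range.2 fun n => by
      rw [h n, neg_sub]
      exact sub_le_self _ (hy.1 ⟨n, rfl⟩))

theorem eq_of_forall_eq_on_inf_nsmul (hD : DedekindCompleteIn (Set.univ : Set α)) {e : α}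
    (he : IsWeakOrderUnitIn Set.univ e) {U W : α →+ α} (hU : SeqOrderContinuous U)
    (hW : SeqOrderContinuous W) {f : α} (h : ∀ n : ℕ, U (f ⊓ n • e) = W (f ⊓ n • e)) :
    U f = W f := by
  have hy : Antitone fun n : ℕ => (f - n • e)⁺ := fun m n hmn =>
    posPart_mono (sub_le_sub_left (nsmul_le_nsmul_left he.1.le hmn) f)
  have hy0 := he.isGLB_range_posPart_sub_nsmul hD f
  rw [← sub_eq_zero]
  refine eq_zero_of_forall_eq_sub (hU _ hy hy0) (hW _ hy hy0) fun n => ?_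
  have hsplit : f = f ⊓ n • e + (f - n • e)⁺ :=
    sub_eq_iff_eq_add'.1 (by rw [sub_inf, sub_self, sup_comm, posPart_def])
  conv_lhs => rw [hsplit]
  simp only [map_add, h n, Function.comp_apply]
  abel

end LatticeOrderedGroup

section RieszSpace

variable {V : Type*} [AddCommGroup V] [Lattice V] [Module ℝ V]

theorem inf_smul_eq_zero_of_inf_eq_zero [IsOrderedAddMonoid V] [PosSMulMono ℝ V] {g h : V}
    (hg : 0 ≤ g) (hh : 0 ≤ h) (hgh : h ⊓ g = 0) {t : ℝ} (ht : 0 ≤ t) : h ⊓ t • g = 0 := by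
  refine le_antisymm ?_ (le_inf hh (smul_nonneg ht hg))
  calc h ⊓ t • g ≤ h ⊓ ⌈t⌉₊ • g := inf_le_inf_left h <| by
        rw [← Nat.cast_smul_eq_nsmul ℝ]
        exact smul_le_smul_of_nonneg_right (Nat.le_ceil t) hg
    _ = 0 := inf_nsmul_eq_zero_of_inf_eq_zero hg hh hgh _

theorem IsRieszHom.map_nonneg {S : V →ₗ[ℝ] V} (hS : IsRieszHom S) {x : V} (hx : 0 ≤ x) :
    0 ≤ S x := by
  simpa [sup_eq_left.2 hx] using hS x 0

theorem OrderContinuousOp.seqOrderContinuous {S : V →ₗ[ℝ] V} (hS : OrderContinuousOp S) :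
    SeqOrderContinuous S := fun x hx h0 => by
  rw [Set.range_comp]
  exact hS _ (Set.range_nonempty x) hx.directed_ge.directedOn_range h0

theorem IsCondExpOn.map_nonneg {T : V → V} (hT : IsCondExpOn Set.univ T) {x : V} (hx : 0 ≤ x) :
    0 ≤ T x :=
  hT.2.2.2.1 x trivial hx

theorem IsCondExpOn.seqOrderContinuous {T : V → V} (hT : IsCondExpOn Set.univ T) :
    SeqOrderContinuous T := fun x hx h0 => by
  have h := hT.2.2.2.2.1 _ (Set.subset_univ _) (Set.range_nonempty x)
    hx.directed_ge.directedOn_range ⟨fun a ha => h0.1 ha, fun b _ hb => h0.2 hb⟩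
  rw [Set.range_comp]
  exact ⟨fun a ha => h.1 a ha, fun b hb => h.2 b trivial hb⟩

section

variable [IsOrderedAddMonoid V]

theorem IsBandProjection.apply_le_posPart {P : V →ₗ[ℝ] V} (hP : IsBandProjection P) (a : V) :
    P a ≤ a⁺ :=
  calc P a = P a⁺ - P a⁻ := by rw [← map_sub, posPart_sub_negPart]
    _ ≤ P a⁺ := sub_le_self _ (hP.2 _ (negPart_nonneg a)).1
    _ ≤ a⁺ := (hP.2 _ (posPart_nonneg a)).2

theorem IsBandProjection.sub_le_smul_sub {P Q : V →ₗ[ℝ] V} (hQ : IsBandProjection Q) {e f : V}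
    {c : ℝ} (hP : P (f - c • e) = (f - c • e)⁺) : Q f - P f ≤ c • (Q e - P e) := by
  have h := (hQ.apply_le_posPart _).trans_eq hP.symm
  rw [map_sub, map_sub, map_smul, map_smul, sub_le_sub_iff] at h
  rwa [smul_sub, sub_le_sub_iff, add_comm (c • Q e)]

theorem sub_le_smul_of_smul_le_of_le_smul {U W : V →ₗ[ℝ] V} (hU : Monotone U) (hW : Monotone W)
    {x p : V} (hp : U p = W p) {c d : ℝ} (hc : c • p ≤ x) (hd : x ≤ d • p) :
    U x - W x ≤ (d - c) • W p :=
  calc U x - W x ≤ U (d • p) - W (c • p) := sub_le_sub (hU hd) (hW hc)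
    _ = (d - c) • W p := by rw [map_smul, map_smul, hp, sub_smul]

theorem sub_le_smul_sub_of_bandProjections {P Q U W : V →ₗ[ℝ] V} (hP : IsBandProjection P)
    (hQ : IsBandProjection Q) (hU : Monotone U) (hW : Monotone W) {e f : V} {c d : ℝ}
    (hPc : P (f - c • e) = (f - c • e)⁺) (hQd : Q (f - d • e) = (f - d • e)⁺)
    (hUW : U (P e - Q e) = W (P e - Q e)) :
    U (P f - Q f) - W (P f - Q f) ≤ (d - c) • W (P e - Q e) := by
  have hlow := neg_le_neg (hQ.sub_le_smul_sub hPc)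
  rw [← smul_neg, neg_sub, neg_sub] at hlow
  exact sub_le_smul_of_smul_le_of_le_smul hU hW hUW hlow (hP.sub_le_smul_sub hQd)

end

section BandComponent

variable (hD : DedekindCompleteIn (Set.univ : Set V))
include hD

/-- For `g, x ≥ 0`, the component `⨆_{t ≥ 0} x ⊓ t • g` of `x` in the band generated by `g`. -/
noncomputable def bandComponent (g x : V) : V :=
  (hD.exists_isLUB (A := (fun t : ℝ => x ⊓ t • g) '' Set.Ici 0)
    ⟨_, Set.mem_image_of_mem _ (le_refl (0 : ℝ))⟩
    ⟨x, Set.forall_mem_image.2 fun _ _ => inf_le_left⟩).choose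

variable {hD}

theorem isLUB_bandComponent (g x : V) :
    IsLUB ((fun t : ℝ => x ⊓ t • g) '' Set.Ici 0) (bandComponent hD g x) :=
  Exists.choose_spec _

theorem inf_smul_le_bandComponent {g x : V} {t : ℝ} (ht : 0 ≤ t) :
    x ⊓ t • g ≤ bandComponent hD g x :=
  (isLUB_bandComponent g x).1 (Set.mem_image_of_mem _ ht)

theorem bandComponent_le {g x b : V} (hb : ∀ t : ℝ, 0 ≤ t → x ⊓ t • g ≤ b) :
    bandComponent hD g x ≤ b :=
  (isLUB_bandComponent g x).2 (Set.forall_mem_image.2 hb)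

theorem bandComponent_le_self (g x : V) : bandComponent hD g x ≤ x :=
  bandComponent_le fun _ _ => inf_le_left

theorem bandComponent_nonneg (g : V) {x : V} (hx : 0 ≤ x) : 0 ≤ bandComponent hD g x := by
  simpa [inf_eq_right.2 hx] using inf_smul_le_bandComponent (hD := hD) (g := g) (x := x) le_rfl

theorem bandComponent_bandComponent (g x : V) :
    bandComponent hD g (bandComponent hD g x) = bandComponent hD g x :=
  le_antisymm (bandComponent_le_self _ _) <| bandComponent_le fun _ ht =>
    (le_inf (inf_smul_le_bandComponent ht) inf_le_right).trans (inf_smul_le_bandComponent ht)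

theorem bandComponent_self (g : V) : bandComponent hD g g = g :=
  le_antisymm (bandComponent_le_self g g)
    (by simpa using inf_smul_le_bandComponent (hD := hD) (g := g) (x := g) zero_le_one)

variable [PosSMulMono ℝ V]

theorem bandComponent_smul_le (g x : V) {r : ℝ} (hr : 0 < r) :
    bandComponent hD g (r • x) ≤ r • bandComponent hD g x := by
  refine bandComponent_le fun t ht => ?_
  have hrt : r • x ⊓ t • g = r • (x ⊓ (r⁻¹ * t) • g) := by
    have := (OrderIso.smulRight hr).map_inf x ((r⁻¹ * t) • g)
    rwa [OrderIso.smulRight_apply, OrderIso.smulRight_apply, OrderIso.smulRight_apply, smul_smul,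
      mul_inv_cancel_left₀ hr.ne', eq_comm] at this
  rw [hrt]
  exact smul_le_smul_of_nonneg_left
    (inf_smul_le_bandComponent (mul_nonneg (inv_nonneg.2 hr.le) ht)) hr.le

theorem bandComponent_smul (g x : V) {r : ℝ} (hr : 0 ≤ r) :
    bandComponent hD g (r • x) = r • bandComponent hD g x := by
  rcases hr.eq_or_lt with rfl | hr
  · simpa using le_antisymm (bandComponent_le_self g 0)
      (by simpa using inf_smul_le_bandComponent (hD := hD) (g := g) (x := 0) le_rfl)
  refine le_antisymm (bandComponent_smul_le g x hr) ?_
  have h := bandComponent_smul_le (hD := hD) g (r • x) (inv_pos.2 hr)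
  rw [inv_smul_smul₀ hr.ne'] at h
  exact (le_inv_smul_iff_of_pos hr).1 h

variable [IsOrderedAddMonoid V]

theorem bandComponent_add {g x y : V} (hg : 0 ≤ g) (hx : 0 ≤ x) (hy : 0 ≤ y) :
    bandComponent hD g (x + y) = bandComponent hD g x + bandComponent hD g y := by
  refine le_antisymm (bandComponent_le fun t ht => ?_) ?_
  · exact (inf_add_le_add_inf hx hy (smul_nonneg ht hg)).trans
      (add_le_add (inf_smul_le_bandComponent ht) (inf_smul_le_bandComponent ht))
  · have key : ∀ t : ℝ, 0 ≤ t → ∀ s : ℝ, 0 ≤ s →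
        x ⊓ s • g + y ⊓ t • g ≤ bandComponent hD g (x + y) := fun t ht s hs =>
      (le_inf (add_le_add inf_le_left inf_le_left)
        (show _ ≤ (s + t) • g by rw [add_smul]; exact add_le_add inf_le_right inf_le_right)).trans
        (inf_smul_le_bandComponent (add_nonneg hs ht))
    rw [← le_sub_iff_add_le']
    refine bandComponent_le fun t ht => ?_
    rw [le_sub_iff_add_le', ← le_sub_iff_add_le]
    exact bandComponent_le fun s hs => le_sub_iff_add_le.2 (key t ht s hs)

theorem bandComponent_eq_zero_of_inf_eq_zero {g h : V} (hg : 0 ≤ g) (hh : 0 ≤ h)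
    (hgh : h ⊓ g = 0) : bandComponent hD g h = 0 :=
  le_antisymm (bandComponent_le fun _ ht => (inf_smul_eq_zero_of_inf_eq_zero hg hh hgh ht).le)
    (bandComponent_nonneg g hh)

end BandComponent

variable [IsOrderedAddMonoid V] [PosSMulMono ℝ V]

section ConeExtension

variable {F : Type*} [AddCommGroup F] [Module ℝ F] (φ : V → F)
  (hadd : ∀ x y : V, 0 ≤ x → 0 ≤ y → φ (x + y) = φ x + φ y)
  (hsmul : ∀ (r : ℝ) (x : V), 0 ≤ r → 0 ≤ x → φ (r • x) = r • φ x)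

def linearMapOfNonneg : V →ₗ[ℝ] F where
  toFun x := φ x⁺ - φ x⁻
  map_add' x y := by
    have hxy : x + y = (x⁺ + y⁺) - (x⁻ + y⁻) := by
      rw [add_sub_add_comm, posPart_sub_negPart, posPart_sub_negPart]
    rw [map_posPart_sub_map_negPart_of_eq_sub hadd
        (add_nonneg (posPart_nonneg x) (posPart_nonneg y))
        (add_nonneg (negPart_nonneg x) (negPart_nonneg y)) hxy,
      hadd _ _ (posPart_nonneg x) (posPart_nonneg y),
      hadd _ _ (negPart_nonneg x) (negPart_nonneg y)]
    abel
  map_smul' r x := by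
    rcases le_or_gt 0 r with hr | hr
    · rw [map_posPart_sub_map_negPart_of_eq_sub hadd (smul_nonneg hr (posPart_nonneg x))
        (smul_nonneg hr (negPart_nonneg x)) (by rw [← smul_sub, posPart_sub_negPart]),
        hsmul _ _ hr (posPart_nonneg x), hsmul _ _ hr (negPart_nonneg x), smul_sub]
      rfl
    · have hr' : 0 ≤ -r := by linarith
      rw [map_posPart_sub_map_negPart_of_eq_sub hadd (smul_nonneg hr' (negPart_nonneg x))
        (smul_nonneg hr' (posPart_nonneg x))
        (by rw [← smul_sub, neg_smul, ← smul_neg, neg_sub, posPart_sub_negPart]),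
        hsmul _ _ hr' (posPart_nonneg x), hsmul _ _ hr' (negPart_nonneg x), ← smul_sub,
        neg_smul, ← smul_neg, neg_sub]
      rfl

theorem linearMapOfNonneg_apply (x : V) :
    linearMapOfNonneg φ hadd hsmul x = φ x⁺ - φ x⁻ := rfl

theorem linearMapOfNonneg_apply_of_nonneg {x : V} (hx : 0 ≤ x) :
    linearMapOfNonneg φ hadd hsmul x = φ x := by
  have hφ0 : φ 0 = 0 := by simpa using hadd 0 0 le_rfl le_rfl
  rw [linearMapOfNonneg_apply, posPart_eq_self.2 hx, negPart_eq_zero.2 hx, hφ0, sub_zero]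

end ConeExtension

section BandProjection

variable (hD : DedekindCompleteIn (Set.univ : Set V))

/-- The band projection onto the band generated by `g ≥ 0`. -/
noncomputable def bandProjection {g : V} (hg : 0 ≤ g) : V →ₗ[ℝ] V :=
  linearMapOfNonneg (bandComponent hD g) (fun _ _ => bandComponent_add hg)
    fun _ x hr _ => bandComponent_smul g x hr

variable {hD}

theorem bandProjection_apply {g : V} (hg : 0 ≤ g) (x : V) :
    bandProjection hD hg x = bandComponent hD g x⁺ - bandComponent hD g x⁻ := rfl

theorem isBandProjection_bandProjection {g : V} (hg : 0 ≤ g) :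
    IsBandProjection (bandProjection hD hg) := by
  refine ⟨fun f => ?_, fun f hf => ?_⟩
  · rw [bandProjection_apply hg (bandProjection hD hg f),
      map_posPart_sub_map_negPart_of_eq_sub (fun _ _ => bandComponent_add hg)
        (bandComponent_nonneg g (posPart_nonneg f)) (bandComponent_nonneg g (negPart_nonneg f))
        (bandProjection_apply hg f),
      bandComponent_bandComponent, bandComponent_bandComponent, bandProjection_apply]
  · rw [bandProjection, linearMapOfNonneg_apply_of_nonneg _ _ _ hf]
    exact ⟨bandComponent_nonneg g hf, bandComponent_le_self g f⟩

theorem bandProjection_posPart (a : V) : bandProjection hD (posPart_nonneg a) a = a⁺ := by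
  rw [bandProjection_apply, bandComponent_self,
    bandComponent_eq_zero_of_inf_eq_zero (posPart_nonneg a) (negPart_nonneg a)
      (by rw [inf_comm, posPart_inf_negPart_eq_zero]), sub_zero]

end BandProjection

theorem DedekindCompleteIn.nonpos_of_forall_le_inv_smul (hD : DedekindCompleteIn (Set.univ : Set V))
    {x y : V} (hy : 0 ≤ y) (h : ∀ n : ℕ, 0 < n → x ≤ (n : ℝ)⁻¹ • y) : x ≤ 0 := by
  refine hD.nonpos_of_forall_nsmul_le (y := y) fun n => ?_
  rcases n.eq_zero_or_pos with rfl | hn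
  · simpa using hy
  rw [← Nat.cast_smul_eq_nsmul ℝ]
  exact (le_inv_smul_iff_of_pos (Nat.cast_pos.2 hn)).1 (h n hn)

variable (hD : DedekindCompleteIn (Set.univ : Set V))
include hD

theorem sub_le_inv_smul_of_eq_on_bandProjections {U W : V →ₗ[ℝ] V} (hU : Monotone U)
    (hW : Monotone W) {e : V} (hUW : ∀ P : V →ₗ[ℝ] V, IsBandProjection P → U (P e) = W (P e))
    {f : V} (hf0 : 0 ≤ f) (hfe : f ≤ e) {m : ℕ} (hm : 0 < m) :
    U f - W f ≤ (m : ℝ)⁻¹ • W e := by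
  set c : ℕ → ℝ := fun i => i / m
  -- `P i` projects onto the band where `f > c i • e`
  obtain ⟨P, hP, hPc⟩ : ∃ P : ℕ → V →ₗ[ℝ] V, (∀ i, IsBandProjection (P i)) ∧
      ∀ i, P i (f - c i • e) = (f - c i • e)⁺ :=
    ⟨fun i => bandProjection hD _, fun _ => isBandProjection_bandProjection _,
      fun _ => bandProjection_posPart _⟩
  have hstep : ∀ j, (U - W) (P j f - P (j + 1) f) ≤ (m : ℝ)⁻¹ • W (P j e - P (j + 1) e) := by
    intro j
    have hc : c (j + 1) - c j = (m : ℝ)⁻¹ := by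
      simp only [c]
      push_cast
      ring
    rw [LinearMap.sub_apply, ← hc]
    exact sub_le_smul_sub_of_bandProjections (hP j) (hP (j + 1)) hU hW (hPc j) (hPc (j + 1))
      (by rw [map_sub, map_sub, hUW _ (hP j), hUW _ (hP (j + 1))])
  have hF0 : P 0 f = f := by simpa [c, posPart_eq_self.2 hf0] using hPc 0
  have hFm : P m f = P m e := by
    have h := hPc m
    rwa [show c m = 1 from div_self (Nat.cast_pos.2 hm).ne', one_smul,
      posPart_eq_zero.2 (sub_nonpos.2 hfe), map_sub, sub_eq_zero] at h
  have he0 : 0 ≤ e := hf0.trans hfe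
  calc U f - W f = (U - W) (P 0 f - P m f) := by
        rw [hF0, hFm, map_sub, LinearMap.sub_apply, LinearMap.sub_apply, hUW _ (hP m), sub_self,
          sub_zero]
    _ = ∑ j ∈ Finset.range m, (U - W) (P j f - P (j + 1) f) := by
        rw [← map_sum, Finset.sum_range_sub']
    _ ≤ ∑ j ∈ Finset.range m, (m : ℝ)⁻¹ • W (P j e - P (j + 1) e) :=
        Finset.sum_le_sum fun j _ => hstep j
    _ = (m : ℝ)⁻¹ • W (P 0 e - P m e) := by
        rw [← Finset.smul_sum, ← map_sum, Finset.sum_range_sub']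
    _ ≤ (m : ℝ)⁻¹ • W e := smul_le_smul_of_nonneg_left
        (hW ((sub_le_self _ ((hP m).2 e he0).1).trans ((hP 0).2 e he0).2))
        (inv_nonneg.2 (Nat.cast_nonneg m))

theorem eq_of_eq_on_bandProjections {U W : V →ₗ[ℝ] V} (hU : Monotone U) (hW : Monotone W)
    {e : V} (hUW : ∀ P : V →ₗ[ℝ] V, IsBandProjection P → U (P e) = W (P e)) {f : V}
    (hf0 : 0 ≤ f) (hfe : f ≤ e) : U f = W f := by
  have hUe : U e = W e := hUW LinearMap.id ⟨fun _ => rfl, fun _ hx => ⟨hx, le_rfl⟩⟩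
  have hWe : 0 ≤ W e := by simpa using hW (hf0.trans hfe)
  refine le_antisymm (sub_nonpos.1 ?_) (sub_nonpos.1 ?_) <;>
    refine hD.nonpos_of_forall_le_inv_smul hWe fun m hm => ?_
  · exact sub_le_inv_smul_of_eq_on_bandProjections hD hU hW hUW hf0 hfe hm
  · simpa [hUe] using sub_le_inv_smul_of_eq_on_bandProjections hD hW hU
      (fun P hP => (hUW P hP).symm) hf0 hfe hm

end RieszSpace

theorem TS_eq_T_iff_bandProjections_general (T S : E →ₗ[ℝ] E) (e : E)
    (hD : DedekindCompleteIn (Set.univ : Set E))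
    (he : IsWeakOrderUnitIn (Set.univ : Set E) e)
    (hT : IsCondExpOn Set.univ T)
    (hS : IsRieszHom S) (hSoc : OrderContinuousOp S) :
    (∀ P : E →ₗ[ℝ] E, IsBandProjection P → T (S (P e)) = T (P e)) ↔
      ∀ f : E, T (S f) = T f := by
  have : IsOrderedAddMonoid E := { add_le_add_left := fun _ _ h c => add_le_add_left h c }
  refine ⟨fun h => ?_, fun h P _ => h (P e)⟩
  have hTmono : Monotone T := (monotone_iff_map_nonneg T).2 fun _ => hT.map_nonneg
  have hSmono : Monotone S := (monotone_iff_map_nonneg S).2 fun _ => hS.map_nonneg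
  have hpos : ∀ f : E, 0 ≤ f → T (S f) = T f := fun f hf =>
    eq_of_forall_eq_on_inf_nsmul hD he (U := (T ∘ₗ S).toAddMonoidHom) (W := T.toAddMonoidHom)
      (hT.seqOrderContinuous.comp hSoc.seqOrderContinuous hSmono) hT.seqOrderContinuous
      fun n => eq_of_eq_on_bandProjections hD (U := T ∘ₗ S) (hTmono.comp hSmono) hTmono
        (fun P hP => by simp [map_nsmul, h P hP]) (le_inf hf (nsmul_nonneg he.1.le n)) inf_le_right
  intro f
  rw [← posPart_sub_negPart f, map_sub, map_sub, map_sub, hpos _ (posPart_nonneg f),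
    hpos _ (negPart_nonneg f)]

/-- The condition `TSPe = TPe` for all band projections `P` is equivalent to `TSf = Tf`
for all `f ∈ E` (via Freudenthal's spectral theorem). -/
theorem TS_eq_T_iff_bandProjections (T S : E →ₗ[ℝ] E) (e : E)
    (hD : DedekindCompleteIn (Set.univ : Set E))
    (he : IsWeakOrderUnitIn (Set.univ : Set E) e)
    (hT : IsCondExpOn Set.univ T) (hTe : T e = e)
    (hS : IsRieszHom S) (hSoc : OrderContinuousOp S) (hSe : S e = e) :
    (∀ P : E →ₗ[ℝ] E, IsBandProjection P → T (S (P e)) = T (P e)) ↔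
      ∀ f : E, T (S f) = T f :=
  TS_eq_T_iff_bandProjections_general T S e hD he hT hS hSoc
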